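/- The constant C_{p,q}, defined as the smallest C such that comass(a ∧ b) ≤ C · comass(a) · comass(b) for all p-forms a and q-forms b on ℝ^m, does not depend on m (for m ≥ p+q): the value of C valid on ℝ^(p+q) is valid on ℝ^m for all m. -/

import Mathlib

open scoped BigOperators RealInnerProductSpace

/-- Comass of a k-form on a real inner product space: the supremum of |ω(v₁,…,v_k)|
over tuples of vectors of norm at most 1. -/
noncomputable def comass {E : Type*} [NormedAddCommGroup E] [InnerProductSpace ℝ E] {k : ℕ}
    (ω : E [⋀^Fin k]→ₗ[ℝ] ℝ) : ℝ :=
  sSup {r | ∃ v : Fin k → E, (∀ i, ‖v i‖ ≤ 1) ∧ r = |ω v|}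

/-- Wedge product of real-valued alternating forms (shuffle convention, so that the
wedge of dual basis covectors evaluates as a determinant). -/
noncomputable def wedge {E : Type*} [AddCommGroup E] [Module ℝ E] {p q : ℕ}
    (a : E [⋀^Fin p]→ₗ[ℝ] ℝ) (b : E [⋀^Fin q]→ₗ[ℝ] ℝ) :
    E [⋀^Fin (p + q)]→ₗ[ℝ] ℝ :=
  (TensorProduct.lid ℝ ℝ).toLinearMap.compAlternatingMap
    ((a.domCoprod b).domDomCongr finSumFinEquiv)

/-- The standard inner product of two k-forms on Euclidean n-space, for which the
increasing wedges of standard dual basis vectors are orthonormal. -/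
noncomputable def formInner {n k : ℕ}
    (a b : (EuclideanSpace ℝ (Fin n)) [⋀^Fin k]→ₗ[ℝ] ℝ) : ℝ :=
  (1 / (k.factorial : ℝ)) *
    ∑ f : Fin k → Fin n,
      a (fun i => EuclideanSpace.single (f i) 1) * b (fun i => EuclideanSpace.single (f i) 1)

/-- The standard volume form on Euclidean n-space. -/
noncomputable def vol (n : ℕ) : (EuclideanSpace ℝ (Fin n)) [⋀^Fin n]→ₗ[ℝ] ℝ :=
  (EuclideanSpace.basisFun (Fin n) ℝ).toBasis.det


/-!
Any `p + q` vectors of `ℝ^m` lie in the image of a linear isometry `ι : ℝ^(p+q) → ℝ^m`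
(Gram–Schmidt). Pulling `a` and `b` back along `ι` commutes with the wedge product and does not
increase comass, so `|(a ∧ b)(ι w)| ≤ C · comass(ι*a) · comass(ι*b) ≤ C · comass a · comass b`.
The last step needs `C ≥ 0`, which follows by testing the hypothesis on forms of comass at least
one.
-/

open Module Submodule

section Comass

variable {E F : Type*} [NormedAddCommGroup E] [InnerProductSpace ℝ E]
  [NormedAddCommGroup F] [InnerProductSpace ℝ F] {k : ℕ}

lemma comass_nonneg (ω : E [⋀^Fin k]→ₗ[ℝ] ℝ) : 0 ≤ comass ω :=
  Real.sSup_nonneg (by rintro _ ⟨v, -, rfl⟩; exact abs_nonneg _)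

lemma comass_le_of_forall_abs_le (ω : E [⋀^Fin k]→ₗ[ℝ] ℝ) {c : ℝ} (hc : 0 ≤ c)
    (h : ∀ v : Fin k → E, (∀ i, ‖v i‖ ≤ 1) → |ω v| ≤ c) : comass ω ≤ c :=
  Real.sSup_le (by rintro _ ⟨v, hv, rfl⟩; exact h v hv) hc

/-- Expand every argument in an orthonormal basis: a term of the expansion has coefficients of
absolute value at most one. -/
lemma bddAbove_comass [FiniteDimensional ℝ E] (ω : E [⋀^Fin k]→ₗ[ℝ] ℝ) :
    BddAbove {r | ∃ v : Fin k → E, (∀ i, ‖v i‖ ≤ 1) ∧ r = |ω v|} := by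
  let b := stdOrthonormalBasis ℝ E
  refine ⟨∑ f : Fin k → Fin (finrank ℝ E), |ω fun i => b (f i)|, ?_⟩
  rintro _ ⟨v, hv, rfl⟩
  have hexpand : ω v = ∑ f : Fin k → Fin (finrank ℝ E),
      (∏ i, ⟪b (f i), v i⟫) * ω fun i => b (f i) := by
    calc ω v = ω fun i => ∑ j, ⟪b j, v i⟫ • b j := by simp only [b.sum_repr']
      _ = ∑ f : Fin k → Fin (finrank ℝ E), ω fun i => ⟪b (f i), v i⟫ • b (f i) :=
        ω.toMultilinearMap.map_sum _
      _ = _ := Finset.sum_congr rfl fun f _ => ω.toMultilinearMap.map_smul_univ _ _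
  have hcoeff : ∀ f : Fin k → Fin (finrank ℝ E), |∏ i, ⟪b (f i), v i⟫| ≤ 1 := fun f => by
    rw [Finset.abs_prod]
    refine Finset.prod_le_one (fun _ _ => abs_nonneg _) fun i _ => ?_
    calc |⟪b (f i), v i⟫| ≤ ‖b (f i)‖ * ‖v i‖ := abs_real_inner_le_norm _ _
      _ ≤ 1 := by rw [b.orthonormal.1, one_mul]; exact hv i
  rw [hexpand]
  refine (Finset.abs_sum_le_sum_abs _ _).trans (Finset.sum_le_sum fun f _ => ?_)
  rw [abs_mul]
  exact mul_le_of_le_one_left (abs_nonneg _) (hcoeff f)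

lemma abs_apply_le_comass [FiniteDimensional ℝ E] (ω : E [⋀^Fin k]→ₗ[ℝ] ℝ)
    {v : Fin k → E} (hv : ∀ i, ‖v i‖ ≤ 1) : |ω v| ≤ comass ω :=
  le_csSup (bddAbove_comass ω) ⟨v, hv, rfl⟩

lemma comass_compLinearMap_linearIsometry_le [FiniteDimensional ℝ E] (ι : F →ₗᵢ[ℝ] E)
    (ω : E [⋀^Fin k]→ₗ[ℝ] ℝ) : comass (ω.compLinearMap ι.toLinearMap) ≤ comass ω :=
  comass_le_of_forall_abs_le _ (comass_nonneg ω) fun v hv =>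
    abs_apply_le_comass ω fun i => (ι.norm_map (v i)).trans_le (hv i)

/-- The determinant of the inner products with an orthonormal `k`-frame takes the value `1`
on that frame. -/
lemma exists_one_le_comass [FiniteDimensional ℝ E] (hk : k ≤ finrank ℝ E) :
    ∃ ω : E [⋀^Fin k]→ₗ[ℝ] ℝ, 1 ≤ comass ω := by
  let e : Fin k → E := fun i => stdOrthonormalBasis ℝ E (Fin.castLE hk i)
  have he : Orthonormal ℝ e :=
    (stdOrthonormalBasis ℝ E).orthonormal.comp _ (Fin.castLE_injective hk)
  let ω := Matrix.detRowAlternating.compLinearMap (LinearMap.pi fun i => innerₛₗ ℝ (e i))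
  have hω : ω e = 1 := by
    have : (fun j i => ⟪e i, e j⟫) = (1 : Matrix (Fin k) (Fin k) ℝ) := by
      ext j i
      rw [orthonormal_iff_ite.mp he, Matrix.one_apply]
      exact if_congr eq_comm rfl rfl
    exact (congrArg Matrix.det this).trans Matrix.det_one
  refine ⟨ω, ?_⟩
  calc (1 : ℝ) = |ω e| := by rw [hω, abs_one]
    _ ≤ comass ω := abs_apply_le_comass ω fun i => (he.1 i).le

end Comass

lemma wedge_compLinearMap {E F : Type*} [AddCommGroup E] [Module ℝ E] [AddCommGroup F]
    [Module ℝ F] {p q : ℕ} (f : F →ₗ[ℝ] E) (a : E [⋀^Fin p]→ₗ[ℝ] ℝ) (b : E [⋀^Fin q]→ₗ[ℝ] ℝ) :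
    wedge (a.compLinearMap f) (b.compLinearMap f) = (wedge a b).compLinearMap f := by
  ext v
  simp only [wedge, LinearMap.compAlternatingMap_apply, AlternatingMap.domDomCongr_apply,
    AlternatingMap.compLinearMap_apply, AlternatingMap.domCoprod_apply, sum_apply]
  congr 1
  refine Finset.sum_congr rfl fun σ _ => ?_
  induction σ using Quotient.inductionOn' with
  | h σ =>
    rw [AlternatingMap.domCoprod.summand_mk'', AlternatingMap.domCoprod.summand_mk'']
    rfl

section Embedding

variable {E : Type*} [NormedAddCommGroup E] [InnerProductSpace ℝ E] [FiniteDimensional ℝ E]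

/-- Gram–Schmidt applied to `v` followed by zeros yields an orthonormal basis whose first `n`
vectors span a subspace containing every `v i`. -/
lemma exists_submodule_finrank_eq_forall_mem {n : ℕ} (hn : n ≤ finrank ℝ E) (v : Fin n → E) :
    ∃ U : Submodule ℝ E, finrank ℝ U = n ∧ ∀ i, v i ∈ U := by
  obtain ⟨r, hr⟩ := Nat.exists_eq_add_of_le hn
  let f : Fin (n + r) → E := Fin.append v 0
  let b := InnerProductSpace.gramSchmidtOrthonormalBasis (by simpa using hr) f
  refine ⟨span ℝ (Set.range (b ∘ Fin.castAdd r)), ?_, fun i => ?_⟩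
  · rw [finrank_span_eq_card (b.orthonormal.linearIndependent.comp _ (Fin.castAdd_injective n r)),
      Fintype.card_fin]
  have htail : ∀ j, (b.repr (v i)) (Fin.natAdd n j) = 0 := fun j => by
    have hij : Fin.castAdd r i < Fin.natAdd n j := by simp [Fin.lt_def]; omega
    simpa [f] using InnerProductSpace.gramSchmidtOrthonormalBasis_inv_triangular' _ f hij
  rw [← b.sum_repr (v i), Fin.sum_univ_add]
  simp only [htail, zero_smul, Finset.sum_const_zero, add_zero]
  exact sum_mem fun j _ => smul_mem _ _ (subset_span ⟨j, rfl⟩)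

lemma exists_linearIsometry_comp_eq {n : ℕ} (hn : n ≤ finrank ℝ E) (v : Fin n → E) :
    ∃ (ι : EuclideanSpace ℝ (Fin n) →ₗᵢ[ℝ] E) (w : Fin n → EuclideanSpace ℝ (Fin n)),
      v = ι ∘ w := by
  obtain ⟨U, hU, hv⟩ := exists_submodule_finrank_eq_forall_mem hn v
  let e : U ≃ₗᵢ[ℝ] EuclideanSpace ℝ (Fin n) :=
    ((stdOrthonormalBasis ℝ U).reindex (finCongr hU)).repr
  exact ⟨U.subtypeₗᵢ.comp e.symm.toLinearIsometry, fun i => e ⟨v i, hv i⟩, by ext i; simp⟩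

end Embedding

lemma nonneg_of_comass_wedge_le {E : Type*} [NormedAddCommGroup E] [InnerProductSpace ℝ E]
    [FiniteDimensional ℝ E] {p q : ℕ} (hpq : p + q ≤ finrank ℝ E) {C : ℝ}
    (hC : ∀ (a : E [⋀^Fin p]→ₗ[ℝ] ℝ) (b : E [⋀^Fin q]→ₗ[ℝ] ℝ),
      comass (wedge a b) ≤ C * comass a * comass b) : 0 ≤ C := by
  obtain ⟨a, ha⟩ := exists_one_le_comass (E := E) (k := p) (by omega)
  obtain ⟨b, hb⟩ := exists_one_le_comass (E := E) (k := q) (by omega)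
  have h := (comass_nonneg _).trans (hC a b)
  rw [mul_assoc] at h
  exact nonneg_of_mul_nonneg_left h (by positivity)

/-- A comass bound comass(a∧b) ≤ C·comass(a)·comass(b) valid for all
p-forms a and q-forms b on ℝ^(p+q) remains valid on ℝ^m for every m ≥ p+q. -/
theorem wedge_comass_constant_dim_independent (p q m : ℕ) (hm : p + q ≤ m) (C : ℝ)
    (hC : ∀ (a : (EuclideanSpace ℝ (Fin (p + q))) [⋀^Fin p]→ₗ[ℝ] ℝ)
      (b : (EuclideanSpace ℝ (Fin (p + q))) [⋀^Fin q]→ₗ[ℝ] ℝ),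
      comass (wedge a b) ≤ C * comass a * comass b)
    (a : (EuclideanSpace ℝ (Fin m)) [⋀^Fin p]→ₗ[ℝ] ℝ)
    (b : (EuclideanSpace ℝ (Fin m)) [⋀^Fin q]→ₗ[ℝ] ℝ) :
    comass (wedge a b) ≤ C * comass a * comass b := by
  have hC0 : 0 ≤ C := nonneg_of_comass_wedge_le (by simp) hC
  refine comass_le_of_forall_abs_le _
    (mul_nonneg (mul_nonneg hC0 (comass_nonneg a)) (comass_nonneg b)) fun v hv => ?_
  obtain ⟨ι, w, rfl⟩ := exists_linearIsometry_comp_eq (by simpa using hm) v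
  calc |wedge a b (ι ∘ w)|
      = |wedge (a.compLinearMap ι.toLinearMap) (b.compLinearMap ι.toLinearMap) w| := by
        rw [wedge_compLinearMap]; rfl
    _ ≤ comass (wedge (a.compLinearMap ι.toLinearMap) (b.compLinearMap ι.toLinearMap)) :=
        abs_apply_le_comass _ fun i => (ι.norm_map (w i)).symm.trans_le (hv i)
    _ ≤ C * comass (a.compLinearMap ι.toLinearMap) * comass (b.compLinearMap ι.toLinearMap) :=
        hC _ _
    _ ≤ C * comass a * comass b :=
        mul_le_mul (mul_le_mul_of_nonneg_left (comass_compLinearMap_linearIsometry_le ι a) hC0)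
          (comass_compLinearMap_linearIsometry_le ι b) (comass_nonneg _)
          (mul_nonneg hC0 (comass_nonneg a))
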